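/- Let u ⊆ {1,…,d} and v, v' ⊆ u^c, and let (x_i, y_i, z_i, w_i), i = 1,…,n, be i.i.d. random quadruples whose four components are independent and each uniformly distributed on [0,1]^d. Then the generalized estimator τ̂²_u = (1/n) Σ_{i=1}^n (f(x_i) − f(x_{i,v} : z_{i,-v})) · (f(x_{i,u} : y_{i,-u}) − f(y_{i,v'} : w_{i,-v'})) is an unbiased estimator of the lower Sobol' index: E[τ̂²_u] = τ̲²_u. -/

import Mathlib

open MeasureTheory Finset

/-- The uniform (Lebesgue) probability measure on the interval `[0,1]`. -/
noncomputable def unifSeg : Measure ℝ := (volume : Measure ℝ).restrict (Set.Icc 0 1)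

/-- The uniform (Lebesgue) product probability measure on the cube `[0,1]^d`. -/
noncomputable def unifCube (d : ℕ) : Measure (Fin d → ℝ) :=
  Measure.pi fun _ => unifSeg

/-- `glue u x y` is the point whose `j`-th coordinate is `x j` for `j ∈ u`
and `y j` otherwise, i.e. `(x_u : y_{-u})`. -/
def glue {d : ℕ} (u : Finset (Fin d)) (x y : Fin d → ℝ) : Fin d → ℝ :=
  fun j => if j ∈ u then x j else y j

/-- The lower Sobol' index `τ̲²_u` of the set `u`. -/
noncomputable def lowerSobol {d : ℕ} (f : (Fin d → ℝ) → ℝ) (u : Finset (Fin d)) : ℝ :=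
  (∫ x, (∫ y, f (glue u x y) ∂(unifCube d)) ^ 2 ∂(unifCube d))
    - (∫ x, f x ∂(unifCube d)) ^ 2

/-- The variance `σ²` of `f` over the unit cube. -/
noncomputable def sigmaSq {d : ℕ} (f : (Fin d → ℝ) → ℝ) : ℝ :=
  (∫ x, f x ^ 2 ∂(unifCube d)) - (∫ x, f x ∂(unifCube d)) ^ 2

/-- The upper Sobol' index `τ̄²_u = σ² - τ̲²_{uᶜ}` of the set `u`. -/
noncomputable def upperSobol {d : ℕ} (f : (Fin d → ℝ) → ℝ) (u : Finset (Fin d)) : ℝ :=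
  sigmaSq f - lowerSobol f uᶜ

open ProbabilityTheory

/-!
Write `G(x) = ∫ f(x_u : y_{-u}) dy`, so that `τ̲²_u = ∫ G² - μ²`. Gluing two independent uniform
points along a set of coordinates gives again a uniform point. Hence in one summand the factor
`f(x) - f(x_v : z)` has mean zero, which kills the term `f(y_{v'} : w)` (independent of `(x, z)`),
and integrating out `y` turns the remaining term into `(f(x) - f(x_v : z)) G(x)`. Since `G` only
depends on `x_u`, `∫ f G = ∫ G²`; since `v` is disjoint from `u`, the point `(x_v : z)` is
independent of `x_u`, so `∫ f(x_v : z) G(x) = μ²`.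
-/

instance : IsProbabilityMeasure unifSeg :=
  ⟨by simp [unifSeg, Real.volume_Icc]⟩

theorem sq_integral_le_integral_sq {Ω : Type*} [MeasurableSpace Ω] {P : Measure Ω}
    [IsProbabilityMeasure P] {g : Ω → ℝ} (hg : MemLp g 2 P) :
    (∫ ω, g ω ∂P) ^ 2 ≤ ∫ ω, g ω ^ 2 ∂P := by
  have hvar := variance_nonneg g P
  rw [variance_eq_sub hg] at hvar
  simpa using hvar

theorem MeasureTheory.MeasurePreserving.integral_comp_of_aestronglyMeasurable {α β E : Type*}
    [MeasurableSpace α] [MeasurableSpace β] [NormedAddCommGroup E] [NormedSpace ℝ E]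
    {μa : Measure α} {μb : Measure β} {φ : α → β} (hφ : MeasurePreserving φ μa μb)
    {g : β → E} (hg : AEStronglyMeasurable g μb) :
    ∫ a, g (φ a) ∂μa = ∫ b, g b ∂μb := by
  rw [← hφ.map_eq, integral_map hφ.aemeasurable (hφ.map_eq ▸ hg)]

theorem Finset.piecewise_piecewise_of_disjoint {ι : Type*} [DecidableEq ι] {α : ι → Type*}
    {s t : Finset ι} (hst : Disjoint s t) (x y z : ∀ i, α i) :
    t.piecewise (s.piecewise x y) z = t.piecewise y z := by
  ext i
  by_cases hi : i ∈ t
  · simp [hi, Finset.disjoint_right.mp hst hi]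
  · simp [hi]

section PiPiecewise

variable {ι : Type*} [Fintype ι] [DecidableEq ι] {α : ι → Type*} [∀ i, MeasurableSpace (α i)]

/-- `partialMean μ s g x = ∫ g(x_s : y_{-s}) dy`, the conditional mean of `g` given `x_s`. -/
noncomputable def partialMean (μ : ∀ i, Measure (α i)) (s : Finset ι) (g : (∀ i, α i) → ℝ)
    (x : ∀ i, α i) : ℝ :=
  ∫ y, g (s.piecewise x y) ∂Measure.pi μ

variable {μ : ∀ i, Measure (α i)}

theorem partialMean_piecewise_self (s : Finset ι) (g : (∀ i, α i) → ℝ) (x y : ∀ i, α i) :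
    partialMean μ s g (s.piecewise x y) = partialMean μ s g x := by
  simp only [partialMean, Finset.piecewise_idem_left]

theorem partialMean_piecewise_of_disjoint {s t : Finset ι} (hst : Disjoint s t)
    (g : (∀ i, α i) → ℝ) (x y : ∀ i, α i) :
    partialMean μ t g (s.piecewise x y) = partialMean μ t g y := by
  simp only [partialMean, Finset.piecewise_piecewise_of_disjoint hst]

variable [∀ i, IsProbabilityMeasure (μ i)]

theorem measurePreserving_piecewise (s : Finset ι) :
    MeasurePreserving (fun p : (∀ i, α i) × (∀ i, α i) => s.piecewise p.1 p.2)
      ((Measure.pi μ).prod (Measure.pi μ)) (Measure.pi μ) := by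
  let e := MeasurableEquiv.piEquivPiSubtypeProd α (· ∈ s)
  have he : MeasurePreserving e (Measure.pi μ) _ := measurePreserving_piEquivPiSubtypeProd μ _
  have hsplit : (fun p : (∀ i, α i) × (∀ i, α i) => s.piecewise p.1 p.2)
      = e.symm ∘ Prod.map (fun x => (e x).1) (fun x => (e x).2) := by
    ext p i
    by_cases hi : i ∈ s <;>
      simp [e, hi, MeasurableEquiv.piEquivPiSubtypeProd, Equiv.piEquivPiSubtypeProd]
  rw [hsplit]
  exact he.symm.comp ((measurePreserving_fst.comp he).prod (measurePreserving_snd.comp he))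

theorem integral_partialMean {g : (∀ i, α i) → ℝ} (hg : Integrable g (Measure.pi μ))
    (s : Finset ι) : ∫ x, partialMean μ s g x ∂Measure.pi μ = ∫ x, g x ∂Measure.pi μ := by
  have hmp := measurePreserving_piecewise (μ := μ) s
  simp only [partialMean]
  rw [integral_integral (f := fun x y => g (s.piecewise x y))
    (hmp.integrable_comp_of_integrable hg),
    hmp.integral_comp_of_aestronglyMeasurable hg.aestronglyMeasurable]

theorem memLp_partialMean {g : (∀ i, α i) → ℝ} (hg : MemLp g 2 (Measure.pi μ))
    (s : Finset ι) : MemLp (partialMean μ s g) 2 (Measure.pi μ) := by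
  have hG := hg.comp_measurePreserving (measurePreserving_piecewise (μ := μ) s)
  have hmeas : AEStronglyMeasurable (partialMean μ s g) (Measure.pi μ) :=
    hG.1.integral_prod_right'
  rw [memLp_two_iff_integrable_sq hmeas]
  refine hG.integrable_sq.integral_prod_left.mono' (hmeas.pow 2) ?_
  filter_upwards [hG.integrable_sq.prod_right_ae, hG.1.prodMk_left] with x hsq hslice
  rw [Real.norm_of_nonneg (sq_nonneg _)]
  exact sq_integral_le_integral_sq ((memLp_two_iff_integrable_sq hslice).mpr hsq)

theorem integral_mul_partialMean {g h : (∀ i, α i) → ℝ} (hh : MemLp h 2 (Measure.pi μ))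
    (hg : MemLp g 2 (Measure.pi μ)) (s : Finset ι) :
    ∫ x, h x * partialMean μ s g x ∂Measure.pi μ
      = ∫ x, partialMean μ s h x * partialMean μ s g x ∂Measure.pi μ := by
  have hmp := measurePreserving_piecewise (μ := μ) s
  have hG := memLp_partialMean hg s
  have hint : Integrable (fun p => h (s.piecewise p.1 p.2) * partialMean μ s g p.1)
      ((Measure.pi μ).prod (Measure.pi μ)) :=
    (hh.comp_measurePreserving hmp).integrable_mul (hG.comp_measurePreserving measurePreserving_fst)
  calc ∫ x, h x * partialMean μ s g x ∂Measure.pi μ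
      = ∫ p, h (s.piecewise p.1 p.2) * partialMean μ s g (s.piecewise p.1 p.2)
          ∂(Measure.pi μ).prod (Measure.pi μ) :=
        (hmp.integral_comp_of_aestronglyMeasurable (hh.1.mul hG.1)).symm
    _ = ∫ p, h (s.piecewise p.1 p.2) * partialMean μ s g p.1
          ∂(Measure.pi μ).prod (Measure.pi μ) := by
        simp only [partialMean_piecewise_self]
    _ = ∫ x, partialMean μ s h x * partialMean μ s g x ∂Measure.pi μ := by
        rw [integral_prod _ hint]
        simp only [integral_mul_const, partialMean]

theorem integral_partialMean_mul_partialMean_of_disjoint {s t : Finset ι} (hst : Disjoint s t)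
    {g h : (∀ i, α i) → ℝ} (hh : MemLp h 2 (Measure.pi μ)) (hg : MemLp g 2 (Measure.pi μ)) :
    ∫ x, partialMean μ t h x * partialMean μ s g x ∂Measure.pi μ
      = (∫ x, h x ∂Measure.pi μ) * ∫ x, g x ∂Measure.pi μ := by
  have hconst : ∀ x, partialMean μ s (partialMean μ t h) x = ∫ x, h x ∂Measure.pi μ := fun x => by
    change ∫ y, partialMean μ t h (s.piecewise x y) ∂Measure.pi μ = _
    simp only [partialMean_piecewise_of_disjoint hst]
    exact integral_partialMean (hh.integrable one_le_two) t
  rw [integral_mul_partialMean (memLp_partialMean hh t) hg]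
  simp only [hconst, integral_const_mul, integral_partialMean (hg.integrable one_le_two)]

theorem memLp_sub_piecewise {g : (∀ i, α i) → ℝ} (hg : MemLp g 2 (Measure.pi μ))
    (v : Finset ι) :
    MemLp (fun p => g p.1 - g (v.piecewise p.1 p.2)) 2 ((Measure.pi μ).prod (Measure.pi μ)) :=
  (hg.comp_measurePreserving measurePreserving_fst).sub
    (hg.comp_measurePreserving (measurePreserving_piecewise v))

theorem integral_sub_piecewise {g : (∀ i, α i) → ℝ} (hg : Integrable g (Measure.pi μ))
    (v : Finset ι) :
    ∫ p, (g p.1 - g (v.piecewise p.1 p.2)) ∂(Measure.pi μ).prod (Measure.pi μ) = 0 := by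
  have hfst := measurePreserving_fst (μ := Measure.pi μ) (ν := Measure.pi μ)
  have hpw := measurePreserving_piecewise (μ := μ) v
  have hint_fst : Integrable (fun p => g p.1) ((Measure.pi μ).prod (Measure.pi μ)) :=
    hfst.integrable_comp_of_integrable hg
  have hint_pw : Integrable (fun p => g (v.piecewise p.1 p.2))
      ((Measure.pi μ).prod (Measure.pi μ)) :=
    hpw.integrable_comp_of_integrable hg
  rw [integral_sub hint_fst hint_pw, hfst.integral_comp_of_aestronglyMeasurable hg.1,
    hpw.integral_comp_of_aestronglyMeasurable hg.1, sub_self]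

theorem integral_sub_piecewise_mul_partialMean {s v : Finset ι} (hsv : Disjoint s v)
    {g : (∀ i, α i) → ℝ} (hg : MemLp g 2 (Measure.pi μ)) :
    ∫ p, (g p.1 - g (v.piecewise p.1 p.2)) * partialMean μ s g p.1
        ∂(Measure.pi μ).prod (Measure.pi μ)
      = ∫ x, partialMean μ s g x ^ 2 ∂Measure.pi μ - (∫ x, g x ∂Measure.pi μ) ^ 2 := by
  have hfst := measurePreserving_fst (μ := Measure.pi μ) (ν := Measure.pi μ)
  have hpw := measurePreserving_piecewise (μ := μ) v
  have hG := (memLp_partialMean hg s).comp_measurePreserving hfst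
  have hint_pw : Integrable (fun p => g (v.piecewise p.1 p.2) * partialMean μ s g p.1)
      ((Measure.pi μ).prod (Measure.pi μ)) :=
    (hg.comp_measurePreserving hpw).integrable_mul hG
  have hint_fst : Integrable (fun p => g p.1 * partialMean μ s g p.1)
      ((Measure.pi μ).prod (Measure.pi μ)) :=
    (hg.comp_measurePreserving hfst).integrable_mul hG
  have hfirst : ∫ p, g p.1 * partialMean μ s g p.1 ∂(Measure.pi μ).prod (Measure.pi μ)
      = ∫ x, partialMean μ s g x ^ 2 ∂Measure.pi μ := by
    rw [hfst.integral_comp_of_aestronglyMeasurable (g := fun x => g x * partialMean μ s g x)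
      (hg.1.mul (memLp_partialMean hg s).1),
      integral_mul_partialMean hg hg]
    simp only [sq]
  have hsecond : ∫ p, g (v.piecewise p.1 p.2) * partialMean μ s g p.1
        ∂(Measure.pi μ).prod (Measure.pi μ)
      = (∫ x, g x ∂Measure.pi μ) ^ 2 := by
    rw [integral_prod _ hint_pw]
    simp only [integral_mul_const]
    rw [sq, ← integral_partialMean_mul_partialMean_of_disjoint hsv hg hg]
    rfl
  simp only [sub_mul]
  rw [integral_sub hint_fst hint_pw, hfirst, hsecond]

/- The sample `(x, y, z, w)` is arranged as `((x, z), (y, w))`, so that the first factor of the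
kernel is a function of the left pair only. -/
def sobolKernel (g : (∀ i, α i) → ℝ) (u v v' : Finset ι) (x y z w : ∀ i, α i) : ℝ :=
  (g x - g (v.piecewise x z)) * (g (u.piecewise x y) - g (v'.piecewise y w))

theorem integrable_sobolKernel (u v v' : Finset ι)
    {g : (∀ i, α i) → ℝ} (hg : MemLp g 2 (Measure.pi μ)) :
    Integrable (fun q => sobolKernel g u v v' q.1.1 q.2.1 q.1.2 q.2.2)
      (((Measure.pi μ).prod (Measure.pi μ)).prod ((Measure.pi μ).prod (Measure.pi μ))) :=
  ((memLp_sub_piecewise hg v).comp_measurePreserving measurePreserving_fst).integrable_mul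
    (((hg.comp_measurePreserving (measurePreserving_piecewise u)).comp_measurePreserving
      (measurePreserving_fst.prod measurePreserving_fst)).sub
    ((hg.comp_measurePreserving (measurePreserving_piecewise v')).comp_measurePreserving
      measurePreserving_snd))

theorem integral_sobolKernel {u v : Finset ι} (huv : Disjoint u v) (v' : Finset ι)
    {g : (∀ i, α i) → ℝ} (hg : MemLp g 2 (Measure.pi μ)) :
    ∫ q, sobolKernel g u v v' q.1.1 q.2.1 q.1.2 q.2.2
        ∂((Measure.pi μ).prod (Measure.pi μ)).prod ((Measure.pi μ).prod (Measure.pi μ))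
      = ∫ x, partialMean μ u g x ^ 2 ∂Measure.pi μ - (∫ x, g x ∂Measure.pi μ) ^ 2 := by
  have hfst := measurePreserving_fst (μ := Measure.pi μ) (ν := Measure.pi μ)
  have hfst₂ := measurePreserving_fst (μ := (Measure.pi μ).prod (Measure.pi μ))
    (ν := (Measure.pi μ).prod (Measure.pi μ))
  have hsnd₂ := measurePreserving_snd (μ := (Measure.pi μ).prod (Measure.pi μ))
    (ν := (Measure.pi μ).prod (Measure.pi μ))
  have hD := memLp_sub_piecewise hg v
  have hDB : Integrable (fun q => (g q.1.1 - g (v.piecewise q.1.1 q.1.2))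
      * g (u.piecewise q.1.1 q.2.1))
      (((Measure.pi μ).prod (Measure.pi μ)).prod ((Measure.pi μ).prod (Measure.pi μ))) :=
    (hD.comp_measurePreserving hfst₂).integrable_mul
      ((hg.comp_measurePreserving (measurePreserving_piecewise u)).comp_measurePreserving
        (hfst.prod hfst))
  have hDC : Integrable (fun q => (g q.1.1 - g (v.piecewise q.1.1 q.1.2))
      * g (v'.piecewise q.2.1 q.2.2))
      (((Measure.pi μ).prod (Measure.pi μ)).prod ((Measure.pi μ).prod (Measure.pi μ))) :=
    (hD.comp_measurePreserving hfst₂).integrable_mul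
      ((hg.comp_measurePreserving (measurePreserving_piecewise v')).comp_measurePreserving hsnd₂)
  have hDB_eq : ∫ q, (g q.1.1 - g (v.piecewise q.1.1 q.1.2)) * g (u.piecewise q.1.1 q.2.1)
        ∂((Measure.pi μ).prod (Measure.pi μ)).prod ((Measure.pi μ).prod (Measure.pi μ))
      = ∫ p, (g p.1 - g (v.piecewise p.1 p.2)) * partialMean μ u g p.1
        ∂(Measure.pi μ).prod (Measure.pi μ) := by
    rw [integral_prod _ hDB]
    congr 1 with p
    dsimp only
    rw [integral_const_mul, integral_fun_fst (f := fun y => g (u.piecewise p.1 y)),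
      probReal_univ, one_smul, partialMean]
  have hDC_eq : ∫ q, (g q.1.1 - g (v.piecewise q.1.1 q.1.2)) * g (v'.piecewise q.2.1 q.2.2)
        ∂((Measure.pi μ).prod (Measure.pi μ)).prod ((Measure.pi μ).prod (Measure.pi μ)) = 0 :=
    (integral_prod_mul (fun p : (∀ i, α i) × (∀ i, α i) => g p.1 - g (v.piecewise p.1 p.2))
      (fun r : (∀ i, α i) × (∀ i, α i) => g (v'.piecewise r.1 r.2))).trans
      (by rw [integral_sub_piecewise (hg.integrable one_le_two), zero_mul])
  simp only [sobolKernel, mul_sub]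
  rw [integral_sub hDB hDC, hDB_eq, hDC_eq, sub_zero,
    integral_sub_piecewise_mul_partialMean huv hg]

end PiPiecewise

theorem measurePreserving_prod_prod_of_iIndepFun {Ω β : Type*} [MeasurableSpace Ω]
    [MeasurableSpace β] {P : Measure Ω} [IsProbabilityMeasure P] {ν : Measure β}
    {Y : Fin 4 → Ω → β} (hYm : ∀ k, Measurable (Y k)) (hYind : iIndepFun Y P)
    (hYlaw : ∀ k, P.map (Y k) = ν) :
    MeasurePreserving (fun ω => ((Y 0 ω, Y 2 ω), (Y 1 ω, Y 3 ω))) P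
      ((ν.prod ν).prod (ν.prod ν)) := by
  have hpair : ∀ a b : Fin 4, a ≠ b → P.map (fun ω => (Y a ω, Y b ω)) = ν.prod ν :=
    fun a b hab => by
      rw [(hYind.indepFun hab).map_prod_eq_prod_map_map (hYm a).aemeasurable
        (hYm b).aemeasurable, hYlaw, hYlaw]
  refine ⟨((hYm 0).prodMk (hYm 2)).prodMk ((hYm 1).prodMk (hYm 3)), ?_⟩
  rw [(hYind.indepFun_prodMk_prodMk hYm 0 2 1 3 (by decide) (by decide) (by decide)
    (by decide)).map_prod_eq_prod_map_map ((hYm 0).prodMk (hYm 2)).aemeasurable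
    ((hYm 1).prodMk (hYm 3)).aemeasurable, hpair 0 2 (by decide), hpair 1 3 (by decide)]

theorem stmt15_general {d : ℕ} (f : (Fin d → ℝ) → ℝ)
    (hf : MemLp f 2 (unifCube d))
    (u v v' : Finset (Fin d)) (hv : v ⊆ uᶜ)
    (n : ℕ) (hn : 0 < n)
    {Ω : Type*} [MeasurableSpace Ω] (P : Measure Ω) [IsProbabilityMeasure P]
    -- `X (i, 0) = xᵢ`, `X (i, 1) = yᵢ`, `X (i, 2) = zᵢ`, `X (i, 3) = wᵢ`:
    -- i.i.d. quadruples whose four components are independent, i.e. the whole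
    -- family of `4 n` random vectors is independent and uniform on `[0,1]^d`.
    (X : Fin n × Fin 4 → Ω → (Fin d → ℝ))
    (hXmeas : ∀ i, Measurable (X i))
    (hXindep : iIndepFun X P)
    (hXunif : ∀ i, Measure.map (X i) P = unifCube d) :
    (∫ ω, (1 / (n : ℝ)) * ∑ i : Fin n,
        (f (X (i, 0) ω) - f (glue v (X (i, 0) ω) (X (i, 2) ω)))
          * (f (glue u (X (i, 0) ω) (X (i, 1) ω))
              - f (glue v' (X (i, 1) ω) (X (i, 3) ω))) ∂P)
      = lowerSobol f u := by
  have hQ : ∀ i : Fin n, MeasurePreserving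
      (fun ω => ((X (i, 0) ω, X (i, 2) ω), (X (i, 1) ω, X (i, 3) ω))) P
      (((unifCube d).prod (unifCube d)).prod ((unifCube d).prod (unifCube d))) := fun i =>
    measurePreserving_prod_prod_of_iIndepFun (fun k => hXmeas (i, k))
      (hXindep.precomp (Prod.mk_right_injective i)) (fun k => hXunif (i, k))
  have hK := integrable_sobolKernel u v v' hf
  have hint : ∀ i : Fin n, Integrable (fun ω =>
      (f (X (i, 0) ω) - f (glue v (X (i, 0) ω) (X (i, 2) ω)))
        * (f (glue u (X (i, 0) ω) (X (i, 1) ω)) - f (glue v' (X (i, 1) ω) (X (i, 3) ω)))) P :=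
    fun i => (hQ i).integrable_comp_of_integrable hK
  -- `glue u x y` is `u.piecewise x y` and `unifCube d` is a `Measure.pi`, definitionally.
  have hmean : ∀ i : Fin n, ∫ ω, (f (X (i, 0) ω) - f (glue v (X (i, 0) ω) (X (i, 2) ω)))
          * (f (glue u (X (i, 0) ω) (X (i, 1) ω))
              - f (glue v' (X (i, 1) ω) (X (i, 3) ω))) ∂P = lowerSobol f u := fun i =>
    ((hQ i).integral_comp_of_aestronglyMeasurable hK.1).trans
      (integral_sobolKernel (disjoint_of_subset_right hv disjoint_compl_right) v' hf)
  rw [integral_const_mul, integral_finsetSum _ fun i _ => hint i]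
  simp only [hmean, sum_const, card_univ, Fintype.card_fin, nsmul_eq_mul]
  field_simp

theorem stmt15 {d : ℕ} (hd : 1 ≤ d) (f : (Fin d → ℝ) → ℝ)
    (hf : MemLp f 2 (unifCube d))
    (u v v' : Finset (Fin d)) (hv : v ⊆ uᶜ) (hv' : v' ⊆ uᶜ)
    (n : ℕ) (hn : 0 < n)
    {Ω : Type*} [MeasurableSpace Ω] (P : Measure Ω) [IsProbabilityMeasure P]
    -- `X (i, 0) = xᵢ`, `X (i, 1) = yᵢ`, `X (i, 2) = zᵢ`, `X (i, 3) = wᵢ`: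
    -- i.i.d. quadruples whose four components are independent, i.e. the whole
    -- family of `4 n` random vectors is independent and uniform on `[0,1]^d`.
    (X : Fin n × Fin 4 → Ω → (Fin d → ℝ))
    (hXmeas : ∀ i, Measurable (X i))
    (hXindep : iIndepFun X P)
    (hXunif : ∀ i, Measure.map (X i) P = unifCube d) :
    (∫ ω, (1 / (n : ℝ)) * ∑ i : Fin n,
        (f (X (i, 0) ω) - f (glue v (X (i, 0) ω) (X (i, 2) ω)))
          * (f (glue u (X (i, 0) ω) (X (i, 1) ω))
              - f (glue v' (X (i, 1) ω) (X (i, 3) ω))) ∂P)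
      = lowerSobol f u :=
  stmt15_general f hf u v v' hv n hn P X hXmeas hXindep hXunif
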